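/- arXiv:2204.13185 — 2 statements merged into one kernel-verified Lean document; each statement's English description precedes it below -/
import Mathlib

section
/- For the closed unit interval $I = [0,1] \subseteq \mathbb{R}$ and any sheaf of abelian groups $\mathcal{F}$ on $I$, the sheaf cohomology group $H^p(I, \mathcal{F})$ vanishes for all $p > 1$. -/
noncomputable section
open CategoryTheory CategoryTheory.Limits TopologicalSpace Opposite

/-- The category of sheaves of abelian groups on a topological space. -/
abbrev AbSheaf (X : TopCat.{0}) := Sheaf (Opens.grothendieckTopology X) AddCommGrpCat.{0}

/-- The global sections functor `F ↦ F(X)`. -/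
def globalSections (X : TopCat.{0}) : AbSheaf X ⥤ AddCommGrpCat.{0} :=
  sheafToPresheaf (Opens.grothendieckTopology X) AddCommGrpCat ⋙
    (CategoryTheory.evaluation (Opens X)ᵒᵖ AddCommGrpCat).obj (op ⊤)

instance (X : TopCat.{0}) :
    (sheafToPresheaf (Opens.grothendieckTopology X) AddCommGrpCat.{0}).Additive :=
  have : PreservesBinaryBiproducts
      (sheafToPresheaf (Opens.grothendieckTopology X) AddCommGrpCat.{0}) :=
    preservesBinaryBiproducts_of_preservesBinaryProducts _
  Functor.additive_of_preservesBinaryBiproducts _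

instance (X : TopCat.{0}) : (globalSections X).Additive := by
  unfold globalSections; infer_instance

/-- Sheaf cohomology `H^p(X, -)` as the `p`-th right derived functor of global sections. -/
def sheafCohomology (X : TopCat.{0}) [EnoughInjectives (AbSheaf X)] (p : ℕ) :
    AbSheaf X ⥤ AddCommGrpCat.{0} :=
  (globalSections X).rightDerived p

/-- The closed unit interval `[0,1] ⊆ ℝ` as a topological space. -/
def unitInterval' : TopCat.{0} := TopCat.of (Set.Icc (0:ℝ) 1)

/-!
Compute `H^p` from an injective resolution `I⁰ → I¹ → ⋯`; injective sheaves are flasque, being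
retracts of their Godement sheaves. For `p ≥ 2` let `Z = ker (I^{p-1} → I^p)`, a quotient of the
flasque sheaf `I^{p-2}`. A section of `Z` near a closed interval agrees near each endpoint with a
global section (lift it locally to `I^{p-2}` and extend), and gluing these three pieces extends it
to all of `[0, 1]`: `Z` is soft along intervals. Now let `s` be a global cocycle of `I^p`. It lifts
to `I^{p-1}` near every point, and if it lifts on a neighbourhood of `[0, x]` and on an interval
around a nearby point `c`, the two lifts differ on the overlap by a section of `Z`, which can be
replaced by a global section of `Z`; the lifts then glue. So the supremum of the `x` for which `s`
lifts near `[0, x]` is `1`, and `s` is a coboundary.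
-/

open TopCat.Presheaf
open scoped AlgebraicGeometry

namespace AbSheaf

variable {X : TopCat.{0}}

theorem subsingleton_obj_bot (F : AbSheaf X) : Subsingleton (F.obj.obj (op ⊥)) :=
  AddCommGrpCat.subsingleton_of_isZero
    (TopCat.Sheaf.isTerminalOfEmpty (C := AddCommGrpCat) F).isZero

theorem restrict_eq_of_le {F : AbSheaf X} {U₁ U₂ V W : Opens X} {s₁ : F.obj.obj (op U₁)}
    {s₂ : F.obj.obj (op U₂)} (hV₁ : V ≤ U₁) (hV₂ : V ≤ U₂) (h : s₁ |_ V = s₂ |_ V)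
    (hWV : W ≤ V) : s₁ |_ W = s₂ |_ W := by
  rw [← restrict_restrict hWV hV₁, h, restrict_restrict]

theorem exists_gluing₂ (F : AbSheaf X) {U₁ U₂ : Opens X} (s₁ : F.obj.obj (op U₁))
    (s₂ : F.obj.obj (op U₂)) (h : s₁ |_ (U₁ ⊓ U₂) = s₂ |_ (U₁ ⊓ U₂)) :
    ∃ s : F.obj.obj (op (U₁ ⊔ U₂)), s |_ U₁ = s₁ ∧ s |_ U₂ = s₂ := by
  let U : Bool → Opens X := fun b => bif b then U₁ else U₂
  let sf : ∀ b, F.obj.obj (op (U b)) := fun b => match b with | true => s₁ | false => s₂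
  have hsf : IsCompatible F.obj U sf := by
    rintro (_ | _) (_ | _)
    · rfl
    · exact (restrict_eq_of_le inf_le_right inf_le_left h.symm (inf_comm _ _).le :
        s₂ |_ (U₂ ⊓ U₁) = s₁ |_ (U₂ ⊓ U₁))
    · exact h
    · rfl
  have hU : ∀ b, U b ≤ U₁ ⊔ U₂ := by
    rintro (_ | _)
    exacts [le_sup_right, le_sup_left]
  obtain ⟨s, hs, -⟩ := TopCat.Sheaf.existsUnique_gluing' F U (U₁ ⊔ U₂)
    (fun b => homOfLE (hU b)) (sup_le (le_iSup U true) (le_iSup U false)) sf hsf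
  exact ⟨s, hs true, hs false⟩

theorem exists_restrict_eq_of_cover (F : AbSheaf X) {L M R : Opens X} (hcov : L ⊔ (M ⊔ R) = ⊤)
    (hLR : L ⊓ R ≤ M) (sL : F.obj.obj (op L)) (sM : F.obj.obj (op M)) (sR : F.obj.obj (op R))
    (hLM : sL |_ (L ⊓ M) = sM |_ (L ⊓ M)) (hMR : sM |_ (M ⊓ R) = sR |_ (M ⊓ R)) :
    ∃ s : F.obj.obj (op ⊤), s |_ M = sM := by
  obtain ⟨σ, hσM, -⟩ := F.exists_gluing₂ sM sR hMR
  have hLMR : L ⊓ (M ⊔ R) ≤ L ⊓ M := by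
    rw [inf_sup_left]; exact sup_le le_rfl (le_inf inf_le_left hLR)
  have hLMRM : L ⊓ (M ⊔ R) ≤ M := hLMR.trans inf_le_right
  obtain ⟨τ, -, hτ⟩ := F.exists_gluing₂ sL σ <| by
    rw [restrict_eq_of_le inf_le_left inf_le_right hLM hLMR, ← hσM, restrict_restrict]
  have htop : ⊤ ≤ L ⊔ (M ⊔ R) := hcov.ge
  refine ⟨τ |_ ⊤, ?_⟩
  rw [restrict_restrict, ← restrict_restrict le_sup_left le_sup_right, hτ, hσM]

theorem exists_app_eq_restrict_of_epi {G Z : AbSheaf X} (π : G ⟶ Z) [Epi π] {U : Opens X}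
    (s : Z.obj.obj (op U)) {x : X} (hx : x ∈ U) :
    ∃ V, ∃ _ : V ≤ U, x ∈ V ∧ ∃ t, π.hom.app (op V) t = s |_ V := by
  obtain ⟨V, hVU, ht, hxV⟩ := (isLocallySurjective_iff π.hom).mp
    ((TopCat.Sheaf.isLocallySurjective_iff_epi π).mpr ‹_›) U s x hx
  exact ⟨V, hVU, hxV, ht⟩

theorem exists_kernel_ι_app_eq {J K : AbSheaf X} (f : J ⟶ K) {U : Opens X}
    (s : J.obj.obj (op U)) (hs : f.hom.app (op U) s = 0) :
    ∃ z, (kernel.ι f).hom.app (op U) z = s :=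
  TopCat.Sheaf.sections_exact_of_left_exact (ShortComplex.kernelSequence_exact f)
    (inferInstanceAs (Mono (kernel.ι f))) s hs

@[simp]
theorem app_kernel_ι_app {J K : AbSheaf X} (f : J ⟶ K) {U : Opens X}
    (z : (kernel f).obj.obj (op U)) : f.hom.app (op U) ((kernel.ι f).hom.app (op U) z) = 0 := by
  rw [← ConcreteCategory.comp_apply, ← NatTrans.comp_app, ← ObjectProperty.FullSubcategory.comp_hom,
    kernel.condition]
  rfl

theorem exists_local_lift_of_exact {S : ShortComplex (AbSheaf X)} (hS : S.Exact) {U : Opens X}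
    (s : S.X₂.obj.obj (op U)) (hs : S.g.hom.app (op U) s = 0) {x : X} (hx : x ∈ U) :
    ∃ V, ∃ _ : V ≤ U, x ∈ V ∧ ∃ t, S.f.hom.app (op V) t = s |_ V := by
  obtain ⟨z, rfl⟩ := exists_kernel_ι_app_eq S.g s hs
  have := hS.epi_kernelLift
  obtain ⟨V, hVU, hxV, t, ht⟩ := exists_app_eq_restrict_of_epi (kernel.lift S.g S.f S.zero) z hx
  refine ⟨V, hVU, hxV, t, ?_⟩
  rw [← map_restrict, ← ht, ← ConcreteCategory.comp_apply, ← NatTrans.comp_app,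
    ← ObjectProperty.FullSubcategory.comp_hom, kernel.lift_ι]

theorem exists_restrict_eq_of_epi_of_isFlasque {G Z : AbSheaf X} (π : G ⟶ Z) [Epi π]
    [IsFlasque G.obj] {W : Opens X} (a : Z.obj.obj (op W)) {x : X} (hx : x ∈ W) :
    ∃ V, ∃ _ : V ≤ W, x ∈ V ∧ ∃ d : Z.obj.obj (op ⊤), d |_ V = a |_ V := by
  obtain ⟨V, hVW, hxV, t, ht⟩ := exists_app_eq_restrict_of_epi π a hx
  obtain ⟨t', rfl⟩ :=
    (AddCommGrpCat.epi_iff_surjective _).mp (IsFlasque.epi (homOfLE (le_top : V ≤ ⊤)).op) t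
  exact ⟨V, hVW, hxV, π.hom.app _ t', by rw [← map_restrict]; exact ht⟩

theorem exists_lift_sup {F G : AbSheaf X} (f : F ⟶ G) (s : G.obj.obj (op ⊤)) {U₁ U₂ : Opens X}
    (t₁ : F.obj.obj (op U₁)) (t₂ : F.obj.obj (op U₂)) (h₁ : f.hom.app _ t₁ = s |_ U₁)
    (h₂ : f.hom.app _ t₂ = s |_ U₂) (h : t₁ |_ (U₁ ⊓ U₂) = t₂ |_ (U₁ ⊓ U₂)) :
    ∃ t : F.obj.obj (op (U₁ ⊔ U₂)), f.hom.app _ t = s |_ (U₁ ⊔ U₂) := by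
  obtain ⟨t, ht₁, ht₂⟩ := F.exists_gluing₂ t₁ t₂ h
  refine ⟨t, TopCat.Sheaf.eq_of_locally_eq₂ G (homOfLE le_sup_left) (homOfLE le_sup_right) le_rfl
    _ _ ?_ ?_⟩
  · change f.hom.app _ t |_ U₁ = s |_ (U₁ ⊔ U₂) |_ U₁
    rw [← map_restrict, ht₁, h₁, restrict_restrict]
  · change f.hom.app _ t |_ U₂ = s |_ (U₁ ⊔ U₂) |_ U₂
    rw [← map_restrict, ht₂, h₂, restrict_restrict]

def godementSections (G : AbSheaf X) (U : Opens X) : Type :=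
  ∀ x : U, (stalk (C := AddCommGrpCat.{0}) G.obj x.1 : Type)

instance (G : AbSheaf X) (U : Opens X) : AddCommGroup (godementSections G U) :=
  Pi.addCommGroup

def godementPresheaf (G : AbSheaf X) : TopCat.Presheaf AddCommGrpCat.{0} X where
  obj U := AddCommGrpCat.of (godementSections G U.unop)
  map i := AddCommGrpCat.ofHom
    { toFun := fun s x => s ⟨x.1, i.unop.le x.2⟩
      map_zero' := rfl
      map_add' := fun _ _ => rfl }

theorem isSheaf_godementPresheaf (G : AbSheaf X) : (godementPresheaf G).IsSheaf := by
  rw [isSheaf_iff_isSheafUniqueGluing]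
  intro ι U sf hsf
  have hcompat : ∀ i j x (hi : x ∈ U i) (hj : x ∈ U j),
      (sf i : godementSections G (U i)) ⟨x, hi⟩ = (sf j : godementSections G (U j)) ⟨x, hj⟩ :=
    fun i j x hi hj => congrFun (hsf i j) ⟨x, hi, hj⟩
  choose idx hidx using fun x : (iSup U : Opens X) => Opens.mem_iSup.mp x.2
  refine ⟨(fun x => (sf (idx x) : godementSections G _) ⟨x.1, hidx x⟩ :
    godementSections G (iSup U)), fun i => ?_, fun t ht => ?_⟩
  · funext x
    exact hcompat _ i x.1 _ x.2
  · funext x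
    exact congrFun (ht (idx x)) ⟨x.1, hidx x⟩

def godement (G : AbSheaf X) : AbSheaf X := ⟨godementPresheaf G, isSheaf_godementPresheaf G⟩

instance (G : AbSheaf X) : IsFlasque (godement G).obj where
  epi {U V} i := by
    classical
    refine (AddCommGrpCat.epi_iff_surjective _).mpr fun s => ?_
    refine ⟨(fun x => if h : x.1 ∈ V.unop then (s : godementSections G V.unop) ⟨x.1, h⟩ else 0 :
      godementSections G U.unop), ?_⟩
    funext x
    exact dif_pos x.2

def toGodement (G : AbSheaf X) : G ⟶ godement G :=
  ObjectProperty.homMk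
    { app := fun U => AddCommGrpCat.ofHom
        { toFun := fun s => (fun x => germ G.obj U.unop x.1 x.2 s : godementSections G U.unop)
          map_zero' := by funext x; exact map_zero _
          map_add' := fun a b => by funext x; exact map_add _ a b }
      naturality := fun U V i => by
        ext s
        funext x
        exact germ_res_apply' G.obj i x.1 x.2 s }

instance (G : AbSheaf X) : Mono (toGodement G) := by
  have : ∀ U, Mono ((toGodement G).hom.app U) := fun U => by
    refine (AddCommGrpCat.mono_iff_injective _).mpr fun a b hab => ?_
    exact section_ext G U.unop a b fun x hx => congrFun hab ⟨x, hx⟩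
  have : Mono (toGodement G).hom := NatTrans.mono_of_mono_app _
  exact (sheafToPresheaf _ _).mono_of_mono_map this

theorem isFlasque_of_retract {G H : AbSheaf X} (i : G ⟶ H) (r : H ⟶ G) (hir : i ≫ r = 𝟙 G)
    [IsFlasque H.obj] : IsFlasque G.obj where
  epi {U V} ρ := by
    refine (AddCommGrpCat.epi_iff_surjective _).mpr fun s => ?_
    obtain ⟨t, ht⟩ := (AddCommGrpCat.epi_iff_surjective _).mp (IsFlasque.epi (F := H.obj) ρ)
      (i.hom.app V s)
    refine ⟨r.hom.app U t, ?_⟩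
    rw [← ConcreteCategory.comp_apply, ← r.hom.naturality, ConcreteCategory.comp_apply, ht,
      ← ConcreteCategory.comp_apply, ← NatTrans.comp_app, ← ObjectProperty.FullSubcategory.comp_hom,
      hir]
    rfl

instance (G : AbSheaf X) [Injective G] : IsFlasque G.obj :=
  isFlasque_of_retract (toGodement G) (Injective.factorThru (𝟙 G) (toGodement G))
    (Injective.comp_factorThru _ _)

end AbSheaf

theorem exists_one_le_of_step (P : ℝ → Prop) (h0 : P 0)
    (hstep : ∀ c ∈ Set.Icc (0 : ℝ) 1, ∃ δ > 0, ∀ x, c - δ < x → x ≤ c → P x → P (c + δ)) :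
    ∃ r, 1 ≤ r ∧ P r := by
  set T := {r | r ≤ 1 ∧ P r}
  have hT : BddAbove T := ⟨1, fun r hr => hr.1⟩
  have h0T : (0 : ℝ) ∈ T := ⟨zero_le_one, h0⟩
  obtain ⟨δ, hδ, hc⟩ := hstep (sSup T) ⟨le_csSup hT h0T, csSup_le ⟨0, h0T⟩ fun r hr => hr.1⟩
  obtain ⟨x, hxT, hδx⟩ := exists_lt_of_lt_csSup ⟨0, h0T⟩ (sub_lt_self (sSup T) hδ)
  have hcδ := hc x hδx (le_csSup hT hxT) hxT.2
  refine ⟨sSup T + δ, le_of_not_ge fun h => ?_, hcδ⟩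
  linarith [le_csSup hT ⟨h, hcδ⟩]

namespace unitInterval'

open AbSheaf

def opensIio (a : ℝ) : Opens unitInterval' :=
  ⟨{y | y.1 < a}, isOpen_lt continuous_subtype_val continuous_const⟩

def opensIoi (a : ℝ) : Opens unitInterval' :=
  ⟨{y | a < y.1}, isOpen_lt continuous_const continuous_subtype_val⟩

@[simp] theorem mem_opensIio {a : ℝ} {y : unitInterval'} : y ∈ opensIio a ↔ y.1 < a := Iff.rfl

@[simp] theorem mem_opensIoi {a : ℝ} {y : unitInterval'} : y ∈ opensIoi a ↔ a < y.1 := Iff.rfl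

theorem exists_Ioo_subset_of_mem {U : Opens unitInterval'} {p : unitInterval'} (hp : p ∈ U) :
    ∃ δ > 0, ∀ y : unitInterval', p.1 - δ < y.1 → y.1 < p.1 + δ → y ∈ U := by
  have hU : IsOpen (X := Set.Icc (0 : ℝ) 1) (U : Set unitInterval') := U.isOpen
  obtain ⟨δ, hδ, hball⟩ := Metric.isOpen_iff.mp hU p hp
  exact ⟨δ, hδ, fun y h₁ h₂ => hball (abs_lt.mpr ⟨by linarith, by linarith⟩ : |y.1 - p.1| < δ)⟩

/-- `Z` is soft along closed intervals: `Γ(I, Z) → colim_{W ⊇ [u, v]} Z(W)` is surjective. -/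
def IsIntervalSoft (Z : AbSheaf unitInterval') : Prop :=
  ∀ (u v : ℝ) (W : Opens unitInterval'), {y | u ≤ y.1 ∧ y.1 ≤ v} ⊆ (W : Set unitInterval') →
    ∀ a : Z.obj.obj (op W), ∃ (b : Z.obj.obj (op ⊤)) (W' : Opens unitInterval') (_ : W' ≤ W),
      {y | u ≤ y.1 ∧ y.1 ≤ v} ⊆ (W' : Set unitInterval') ∧ b |_ W' = a |_ W'

theorem isIntervalSoft_of_epi {G Z : AbSheaf unitInterval'} (π : G ⟶ Z) [Epi π]
    [IsFlasque G.obj] : IsIntervalSoft Z := by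
  intro u v W hW a
  set u' := max u 0
  set v' := min v 1
  rcases lt_or_ge v' u' with hvu | huv
  · refine ⟨0, ⊥, bot_le, fun y hy => ?_, (Z.subsingleton_obj_bot).elim _ _⟩
    exact absurd hvu (not_lt.mpr ((max_le hy.1 y.2.1).trans (le_min hy.2 y.2.2)))
  have hIcc : ∀ y : unitInterval', u' ≤ y.1 → y.1 ≤ v' → y ∈ W := fun y h₁ h₂ =>
    hW ⟨(le_max_left _ _).trans h₁, h₂.trans (min_le_left _ _)⟩
  obtain ⟨Vu, hVu, huVu, du, hdu⟩ := exists_restrict_eq_of_epi_of_isFlasque π a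
    (hIcc ⟨u', le_max_right _ _, huv.trans (min_le_right _ _)⟩ le_rfl huv)
  obtain ⟨Vv, hVv, hvVv, dv, hdv⟩ := exists_restrict_eq_of_epi_of_isFlasque π a
    (hIcc ⟨v', (le_max_right _ _).trans huv, min_le_right _ _⟩ huv le_rfl)
  obtain ⟨δu, hδu, hballu⟩ := exists_Ioo_subset_of_mem huVu
  obtain ⟨δv, hδv, hballv⟩ := exists_Ioo_subset_of_mem hvVv
  dsimp only at hballu hballv
  set ε := min δu δv
  have hεu : ε ≤ δu := min_le_left _ _
  have hεv : ε ≤ δv := min_le_right _ _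
  have hε : 0 < ε := lt_min hδu hδv
  set L := opensIio (u' + ε)
  set M := W ⊓ opensIoi (u' - ε) ⊓ opensIio (v' + ε)
  set R := opensIoi (v' - ε)
  have hMW : M ≤ W := inf_le_left.trans inf_le_left
  have hLM : L ⊓ M ≤ Vu := by
    intro y hy
    simp only [L, M, Opens.mem_inf, mem_opensIio, mem_opensIoi] at hy
    exact hballu y (by linarith) (by linarith)
  have hMR : M ⊓ R ≤ Vv := by
    intro y hy
    simp only [R, M, Opens.mem_inf, mem_opensIio, mem_opensIoi] at hy
    exact hballv y (by linarith) (by linarith)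
  have hLR : L ⊓ R ≤ M := by
    intro y hy
    simp only [L, R, Opens.mem_inf, mem_opensIio, mem_opensIoi] at hy
    exact ⟨⟨hVu (hballu y (by linarith) (by linarith)), mem_opensIoi.2 (by linarith)⟩,
      mem_opensIio.2 (by linarith)⟩
  have hcov : L ⊔ (M ⊔ R) = ⊤ := by
    refine eq_top_iff.2 fun y _ => ?_
    rcases lt_or_ge y.1 (u' + ε) with h₁ | h₁
    · exact Or.inl h₁
    rcases lt_or_ge (v' - ε) y.1 with h₂ | h₂
    · exact Or.inr (Or.inr h₂)
    exact Or.inr (Or.inl ⟨⟨hIcc y (by linarith) (by linarith), mem_opensIoi.2 (by linarith)⟩,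
      mem_opensIio.2 (by linarith)⟩)
  have hIccM : {y | u ≤ y.1 ∧ y.1 ≤ v} ⊆ (M : Set unitInterval') := fun y hy =>
    ⟨⟨hW hy, mem_opensIoi.2 (by linarith [max_le hy.1 y.2.1])⟩,
      mem_opensIio.2 (by linarith [le_min hy.2 y.2.2])⟩
  obtain ⟨b, hb⟩ := Z.exists_restrict_eq_of_cover hcov hLR (du |_ L) (a |_ M) (dv |_ R)
    (by rw [restrict_restrict, restrict_restrict]; exact restrict_eq_of_le le_top hVu hdu hLM)
    (by
      rw [restrict_restrict, restrict_restrict]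
      exact (restrict_eq_of_le le_top hVv hdv hMR).symm)
  exact ⟨b, M, hMW, hIccM, hb⟩

variable {F G : AbSheaf unitInterval'} {f : F ⟶ G}

theorem exists_lift_sup_of_isIntervalSoft (hK : IsIntervalSoft (kernel f)) (s : G.obj.obj (op ⊤))
    {U V : Opens unitInterval'} {t : F.obj.obj (op U)} {h : F.obj.obj (op V)}
    (ht : f.hom.app _ t = s |_ U) (hh : f.hom.app _ h = s |_ V) {m x : ℝ}
    (hmx : {y | m ≤ y.1 ∧ y.1 ≤ x} ⊆ ((U ⊓ V : Opens unitInterval') : Set unitInterval')) :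
    ∃ τ : F.obj.obj (op (U ⊓ opensIio x ⊔ V ⊓ opensIoi m)), f.hom.app _ τ = s |_ _ := by
  obtain ⟨a, ha⟩ := exists_kernel_ι_app_eq f (t |_ (U ⊓ V) - h |_ (U ⊓ V)) <| by
    rw [map_sub, map_restrict, map_restrict, ht, hh, restrict_restrict, restrict_restrict, sub_self]
  obtain ⟨b, W', hW', hmxW', hb⟩ := hK m x (U ⊓ V) hmx a
  have hZ : U ⊓ opensIio x ⊓ (V ⊓ opensIoi m) ≤ W' := fun y ⟨⟨_, h₁⟩, _, h₂⟩ =>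
    hmxW' ⟨le_of_lt h₂, le_of_lt h₁⟩
  refine exists_lift_sup f s (t |_ _)
    (h |_ (V ⊓ opensIoi m) + (kernel.ι f).hom.app _ (b |_ (V ⊓ opensIoi m))) ?_ ?_ ?_
  · rw [map_restrict, ht, restrict_restrict]
  · rw [map_add, app_kernel_ι_app, add_zero, map_restrict, hh, restrict_restrict]
  · calc t |_ _ |_ _ = (t |_ (U ⊓ V)) |_ (U ⊓ opensIio x ⊓ (V ⊓ opensIoi m)) := by
          rw [restrict_restrict, restrict_restrict]
      _ = ((kernel.ι f).hom.app _ a + h |_ (U ⊓ V)) |_ _ := by rw [ha, sub_add_cancel]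
      _ = _ := by
          rw [restrict_sum, restrict_sum, restrict_restrict, restrict_restrict, add_comm,
            ← map_restrict, ← map_restrict, restrict_restrict,
            restrict_eq_of_le hW' le_top hb.symm hZ]

def LiftsBelow (f : F ⟶ G) (s : G.obj.obj (op ⊤)) (r : ℝ) : Prop :=
  ∃ U : Opens unitInterval', {y | y.1 ≤ r} ⊆ (U : Set unitInterval') ∧
    ∃ t : F.obj.obj (op U), f.hom.app _ t = s |_ U

theorem liftsBelow_step (hK : IsIntervalSoft (kernel f)) {s : G.obj.obj (op ⊤)}
    {p : unitInterval'} {V : Opens unitInterval'} (hp : p ∈ V) {h : F.obj.obj (op V)}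
    (hh : f.hom.app _ h = s |_ V) :
    ∃ δ > 0, ∀ x, p.1 - δ < x → x ≤ p.1 → LiftsBelow f s x → LiftsBelow f s (p.1 + δ) := by
  obtain ⟨δ, hδ, hball⟩ := exists_Ioo_subset_of_mem hp
  refine ⟨δ / 2, half_pos hδ, fun x hpx hxp ⟨U, hU, t, ht⟩ => ?_⟩
  obtain ⟨τ, hτ⟩ := exists_lift_sup_of_isIntervalSoft (m := x - δ / 2) (x := x) hK s ht hh
    fun y hy => ⟨hU hy.2, hball y (by linarith [hy.1]) (by linarith [hy.2])⟩
  refine ⟨_, fun y hy => ?_, τ, hτ⟩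
  rcases lt_or_ge y.1 x with hyx | hxy
  · exact Or.inl ⟨hU hyx.le, hyx⟩
  · exact Or.inr ⟨hball y (by linarith) (by linarith [hy.out]), mem_opensIoi.2 (by linarith)⟩

theorem exists_app_top_eq_of_isIntervalSoft {S : ShortComplex (AbSheaf unitInterval')}
    (hS : S.Exact) (hK : IsIntervalSoft (kernel S.f)) (s : S.X₂.obj.obj (op ⊤))
    (hs : S.g.hom.app _ s = 0) : ∃ t, S.f.hom.app _ t = s := by
  have hloc : ∀ p : unitInterval', ∃ V, p ∈ V ∧ ∃ h, S.f.hom.app (op V) h = s |_ V := fun p => by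
    obtain ⟨V, _, hpV, h, hh⟩ := exists_local_lift_of_exact hS s hs (Set.mem_univ p)
    exact ⟨V, hpV, h, hh⟩
  have h0 : LiftsBelow S.f s 0 := by
    obtain ⟨V, hV, h, hh⟩ := hloc ⟨0, Set.left_mem_Icc.2 zero_le_one⟩
    refine ⟨V, fun y hy => ?_, h, hh⟩
    rwa [show y = ⟨0, _⟩ from Subtype.ext (le_antisymm hy y.2.1)]
  obtain ⟨r, hr, U, hU, t, ht⟩ := exists_one_le_of_step (LiftsBelow S.f s) h0 fun c hc => by
    obtain ⟨V, hcV, h, hh⟩ := hloc ⟨c, hc⟩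
    exact liftsBelow_step hK hcV hh
  obtain rfl : U = ⊤ := eq_top_iff.2 fun y _ => hU (y.2.2.trans hr)
  exact ⟨t, by rw [ht, restrict_self]⟩

end unitInterval'

/-- For the closed unit interval `I = [0,1]` and any sheaf of abelian groups `F` on `I`,
the sheaf cohomology `H^p(I, F)` vanishes for all `p > 1`. -/
theorem sheaf_cohomology_unitInterval_vanishes
    [EnoughInjectives (AbSheaf unitInterval')]
    (F : AbSheaf unitInterval') (p : ℕ) (hp : 1 < p) :
    IsZero ((sheafCohomology unitInterval' p).obj F) := by
  obtain ⟨n, rfl⟩ : ∃ n, p = n + 2 := ⟨p - 2, by omega⟩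
  let R := InjectiveResolution.of F
  refine IsZero.of_iso ((HomologicalComplex.exactAt_iff_isZero_homology _ _).mp ?_)
    (R.isoRightDerivedObj (globalSections unitInterval') (n + 2))
  rw [HomologicalComplex.exactAt_iff' _ (n + 1) (n + 2) (n + 3) (by simp) (by simp),
    ShortComplex.ab_exact_iff]
  have := (R.exact_succ n).epi_kernelLift
  have := R.injective n
  exact unitInterval'.exists_app_top_eq_of_isIntervalSoft (R.exact_succ (n + 1))
    (unitInterval'.isIntervalSoft_of_epi (kernel.lift _ _ (R.cocomplex.d_comp_d n (n + 1) (n + 2))))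
end
end

section
/- Let $X$ be a paracompact Hausdorff space, $U \subseteq X$ open with open inclusion $j: U \hookrightarrow X$, and $\mathcal{S}$ a soft sheaf of abelian groups on $X$. Then the extension by zero $j_! (\mathcal{S}|_U)$ is a soft sheaf on $X$. -/
noncomputable section
open CategoryTheory CategoryTheory.Limits TopologicalSpace Opposite

/-- The stalk of a sheaf of abelian groups at a point. -/
def stalkAt {X : TopCat.{0}} (F : AbSheaf X) (x : X) : AddCommGrpCat.{0} :=
  TopCat.Presheaf.stalk (C := AddCommGrpCat) (X := X) F.val x

/-- The germ map of a sheaf of abelian groups. -/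
def germAt {X : TopCat.{0}} (F : AbSheaf X) (U : Opens X) (x : X) (hx : x ∈ U) :
    F.val.obj (op U) ⟶ stalkAt F x :=
  TopCat.Presheaf.germ (C := AddCommGrpCat) (X := X) F.val U x hx

/-- A section of the sheaf `F` over an arbitrary subset `S ⊆ X` (i.e. a section of the
restriction `F|_S`, described concretely): a compatible family of germs over `S` which
locally comes from honest sections of `F`. -/
@[ext]
structure SectionOver {X : TopCat.{0}} (F : AbSheaf X) (S : Set X) where
  /-- the germ of the section at each point of `S` -/
  germs : ∀ x ∈ S, stalkAt F x
  /-- locally, the family of germs comes from a section of `F` on an open neighborhood -/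
  isLocal : ∀ x (hx : x ∈ S), ∃ (U : Opens X) (_ : x ∈ U) (t : F.val.obj (op U)),
    ∀ y (hyS : y ∈ S) (hyU : y ∈ U), germs y hyS = germAt F U y hyU t

/-- Restriction of a global section of `F` to a section over a subset `S`. -/
def restrictSection {X : TopCat.{0}} (F : AbSheaf X) (S : Set X) (s : F.val.obj (op ⊤)) :
    SectionOver F S where
  germs := fun x _ => germAt F ⊤ x trivial s
  isLocal := fun x _ => ⟨⊤, trivial, s, fun _ _ _ => rfl⟩

/-- A sheaf of abelian groups `F` on `X` is soft if every section of `F` over every closed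
subset extends to a global section. -/
def IsSoft {X : TopCat.{0}} (F : AbSheaf X) : Prop :=
  ∀ S : Set X, IsClosed S → ∀ σ : SectionOver F S,
    ∃ s : F.val.obj (op ⊤), restrictSection F S s = σ

/-- `E` is (isomorphic to) the extension by zero `j_!(G|_U)` of the restriction of `G` to the
open set `U`, realized by a morphism `φ : E ⟶ G` which is an isomorphism on stalks over `U`,
while the stalks of `E` outside of `U` vanish. -/
def IsExtensionByZeroOf {X : TopCat.{0}} (E G : AbSheaf X) (φ : E ⟶ G) (U : Set X) : Prop :=
  (∀ x ∈ U, IsIso ((TopCat.Presheaf.stalkFunctor AddCommGrpCat x).map φ.hom)) ∧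
    (∀ x ∉ U, IsZero (stalkAt E x))

/-!
Push a section `σ` of `E` over a closed set `A` forward along `φ`, extended by zero over the
closed set `Uᶜ` (where `E` has zero stalks), and extend the result to a global section `s` of
the soft sheaf `S`. Every germ of `s` lies in the image of the stalk maps of `φ` (over `U`
because they are isomorphisms, off `U` by construction), and these stalk maps are all
injective, so local preimages of `s` glue to a global section of `E`; it restricts to `σ`
because its germs over `A` have the same images as those of `σ`.
-/

open TopCat.Presheaf

namespace SectionOver

variable {X : TopCat.{0}} {A : Set X}

def map {E F : AbSheaf X} (φ : E ⟶ F) (σ : SectionOver E A) : SectionOver F A where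
  germs x hx := (stalkFunctor AddCommGrpCat x).map φ.hom (σ.germs x hx)
  isLocal x hx := by
    obtain ⟨V, hxV, t, ht⟩ := σ.isLocal x hx
    refine ⟨V, hxV, φ.hom.app (op V) t, fun y hyA hyV => ?_⟩
    rw [ht y hyA hyV]
    exact stalkFunctor_map_germ_apply V y hyV φ.hom t

open Classical in
def extendByZero {F : AbSheaf X} (σ : SectionOver F A) (hA : IsClosed A) {C : Set X}
    (hC : ∀ x ∈ C, IsZero (stalkAt F x)) : SectionOver F (A ∪ C) where
  germs x _ := if h : x ∈ A then σ.germs x h else 0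
  isLocal x hx := by
    by_cases hxA : x ∈ A
    · obtain ⟨V, hxV, t, ht⟩ := σ.isLocal x hxA
      refine ⟨V, hxV, t, fun y hy hyV => ?_⟩
      by_cases hyA : y ∈ A
      · rw [dif_pos hyA, ht y hyA hyV]
      · have := AddCommGrpCat.subsingleton_of_isZero (hC y (hy.resolve_left hyA))
        exact Subsingleton.elim _ _
    · refine ⟨⟨Aᶜ, hA.isOpen_compl⟩, hxA, 0, fun y _ hyA => ?_⟩
      rw [dif_neg hyA, germAt, map_zero]

end SectionOver

theorem IsExtensionByZeroOf.stalkMap_injective {X : TopCat.{0}} {E F : AbSheaf X} {φ : E ⟶ F}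
    {U : Set X} (hE : IsExtensionByZeroOf E F φ U) (x : X) :
    Function.Injective ((stalkFunctor AddCommGrpCat x).map φ.hom) := by
  by_cases hx : x ∈ U
  · have := hE.1 x hx
    exact (ConcreteCategory.bijective_of_isIso _).1
  · have := AddCommGrpCat.subsingleton_of_isZero (hE.2 x hx)
    exact fun a b _ => Subsingleton.elim (α := stalkAt E x) a b

section Lifting

variable {X : TopCat.{0}} {E F : AbSheaf X} (φ : E ⟶ F)

theorem exists_local_preimage_of_stalkMap_eq_germ {W : Opens X} (s : F.obj.obj (op W)) {x : X}
    (hx : x ∈ W) {g : stalkAt E x}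
    (hg : (stalkFunctor AddCommGrpCat x).map φ.hom g = germ F.obj W x hx s) :
    ∃ (V : Opens X) (_ : x ∈ V) (iVW : V ⟶ W) (τ : E.obj.obj (op V)),
      φ.hom.app (op V) τ = F.obj.map iVW.op s := by
  obtain ⟨V₁, hxV₁, τ₁, rfl⟩ := exists_germ_eq E.obj g
  rw [stalkFunctor_map_germ_apply] at hg
  obtain ⟨V, hxV, iVV₁, iVW, heq⟩ := germ_eq F.obj x hxV₁ hx _ _ hg
  refine ⟨V, hxV, iVW, E.obj.map iVV₁.op τ₁, ?_⟩
  rw [NatTrans.naturality_apply, heq]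

theorem exists_app_eq_of_germ_mem_range
    (hφ : ∀ x, Function.Injective ((stalkFunctor AddCommGrpCat x).map φ.hom))
    {W : Opens X} (s : F.obj.obj (op W))
    (hs : ∀ x (hx : x ∈ W),
      germ F.obj W x hx s ∈ Set.range ((stalkFunctor AddCommGrpCat x).map φ.hom)) :
    ∃ t, φ.hom.app (op W) t = s := by
  choose V hxV iVW τ hτ using fun x : W =>
    exists_local_preimage_of_stalkMap_eq_germ φ s x.2 (hs x x.2).choose_spec
  have hcover : W ≤ iSup V := fun x hx => Opens.mem_iSup.mpr ⟨⟨x, hx⟩, hxV _⟩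
  have hcompat : IsCompatible E.obj V τ := fun i j =>
    app_injective_of_stalkFunctor_map_injective φ.hom _ (fun x _ => hφ x) <| by
      rw [NatTrans.naturality_apply, NatTrans.naturality_apply, hτ, hτ,
        ← ConcreteCategory.comp_apply, ← ConcreteCategory.comp_apply, ← F.obj.map_comp,
        ← F.obj.map_comp]
      rfl
  obtain ⟨t, ht, -⟩ := TopCat.Sheaf.existsUnique_gluing' E V W iVW hcover τ hcompat
  refine ⟨t, TopCat.Sheaf.eq_of_locally_eq' F V W iVW hcover _ _ fun i => ?_⟩
  rw [← NatTrans.naturality_apply, ht, hτ]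

end Lifting

theorem isSoft_extensionByZero_general (X : TopCat.{0})
    (U : Opens X) (S : AbSheaf X) (hS : IsSoft S)
    (E : AbSheaf X) (φ : E ⟶ S) (hE : IsExtensionByZeroOf E S φ (U : Set X)) :
    IsSoft E := by
  intro A hA σ
  let σ' := (σ.extendByZero hA hE.2).map φ
  obtain ⟨s, hs⟩ := hS _ (hA.union U.isOpen.isClosed_compl) σ'
  have hs_germ : ∀ x (hx : x ∈ A ∪ (U : Set X)ᶜ), germ S.obj ⊤ x trivial s = σ'.germs x hx :=
    fun x hx => congr_fun₂ (congrArg SectionOver.germs hs) x hx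
  have hrange : ∀ x (hx : x ∈ (⊤ : Opens X)),
      germ S.obj ⊤ x hx s ∈ Set.range ((stalkFunctor AddCommGrpCat x).map φ.hom) := by
    intro x _
    by_cases hxU : x ∈ U
    · have := hE.1 x hxU
      exact (ConcreteCategory.bijective_of_isIso _).2 _
    · exact ⟨_, (hs_germ x (Or.inr hxU)).symm⟩
  obtain ⟨t, rfl⟩ := exists_app_eq_of_germ_mem_range φ hE.stalkMap_injective s hrange
  refine ⟨t, SectionOver.ext (funext₂ fun x hx => hE.stalkMap_injective x ?_)⟩
  have hx_germ := (stalkFunctor_map_germ_apply ⊤ x trivial φ.hom t).trans (hs_germ x (Or.inl hx))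
  simp only [σ', SectionOver.map, SectionOver.extendByZero, dif_pos hx] at hx_germ
  exact hx_germ

/-- If `X` is paracompact Hausdorff, `U ⊆ X` is open and `S` is a soft sheaf of abelian
groups on `X`, then the extension by zero `j_!(S|_U)` is a soft sheaf on `X`. -/
theorem isSoft_extensionByZero (X : TopCat.{0}) [T2Space X] [ParacompactSpace X]
    (U : Opens X) (S : AbSheaf X) (hS : IsSoft S)
    (E : AbSheaf X) (φ : E ⟶ S) (hE : IsExtensionByZeroOf E S φ (U : Set X)) :
    IsSoft E :=
  isSoft_extensionByZero_general X U S hS E φ hE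
end
end
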